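/- Let u : ℝ² → ℝ² be twice continuously differentiable with compact support, and let w : ℝ² → ℝ² be continuously differentiable with div w = 0 everywhere. Then ∫_{ℝ²} Σ_{j=1}^{2} Δu_j(x) (∇u_j(x) · w(x)) dx = - ∫_{ℝ²} Σ_{j,k,ℓ=1}^{2} (∂_k u_j)(x) (∂_ℓ u_j)(x) (∂_k w_ℓ)(x) dx. -/

import Mathlib

open MeasureTheory

/-- Partial derivative in direction `i` of a scalar function on `ℝ²`. -/
noncomputable def pd (i : Fin 2) (f : (Fin 2 → ℝ) → ℝ) (x : Fin 2 → ℝ) : ℝ :=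
  fderiv ℝ f x (Pi.single i 1)

/-- Laplacian of a scalar function on `ℝ²`. -/
noncomputable def lap (f : (Fin 2 → ℝ) → ℝ) (x : Fin 2 → ℝ) : ℝ :=
  pd 0 (pd 0 f) x + pd 1 (pd 1 f) x

/-!
Fix a component `F = u_j` and put `V_k = ∂_kF (∇F · w) - ½ |∇F|² w_k`. Expanding,
`div V = ΔF (∇F · w) + Σ_{k,l} ∂_kF ∂_lF ∂_k w_l - ½ |∇F|² div w`: the remaining terms,
`Σ_{k,l} ∂_kF ∂_k∂_lF w_l` and `-Σ_{k,l} ∂_lF ∂_k∂_lF w_k`, cancel by the symmetry of the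
Hessian of `F`. As `V` is `C¹` with compact support, `div V` integrates to zero, and
`div w = 0` gives the identity for each `j`.
-/

theorem HasCompactSupport.of_eq_zero_off_tsupport {X M N : Type*} [TopologicalSpace X]
    [Zero M] [Zero N] {f : X → M} {g : X → N} (hf : HasCompactSupport f)
    (h : ∀ x ∉ tsupport f, g x = 0) : HasCompactSupport g :=
  hf.mono' fun x hx => by_contra fun hx' => hx (h x hx')

section CompactlySupported

variable {E : Type*} [NormedAddCommGroup E] [NormedSpace ℝ E] [MeasurableSpace E] [BorelSpace E]
  {μ : Measure E} {f : E → ℝ}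

theorem ContDiff.integrable_fderiv_apply [IsFiniteMeasureOnCompacts μ] (hf : ContDiff ℝ 1 f)
    (hc : HasCompactSupport f) (v : E) : Integrable (fun x => fderiv ℝ f x v) μ :=
  ((hf.continuous_fderiv one_ne_zero).clm_apply continuous_const).integrable_of_hasCompactSupport
    (hc.fderiv_apply ℝ v)

theorem integral_fderiv_apply_eq_zero [FiniteDimensional ℝ E] [μ.IsAddHaarMeasure]
    (hf : ContDiff ℝ 1 f) (hc : HasCompactSupport f) (v : E) : ∫ x, fderiv ℝ f x v ∂μ = 0 := by
  simpa using integral_mul_fderiv_eq_neg_fderiv_mul_of_integrable (μ := μ)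
    (f := fun _ => (1 : ℝ)) (g := f) (v := v) (by simp)
    (by simpa using hf.integrable_fderiv_apply hc v)
    (by simpa using hf.continuous.integrable_of_hasCompactSupport hc)
    (fun _ _ => differentiableAt_const _) (fun x _ => hf.differentiable one_ne_zero x)

end CompactlySupported

section PartialDerivative

variable {f g : (Fin 2 → ℝ) → ℝ} {x : Fin 2 → ℝ} {i k : Fin 2}

theorem pd_add (hf : DifferentiableAt ℝ f x) (hg : DifferentiableAt ℝ g x) :
    pd i (fun y => f y + g y) x = pd i f x + pd i g x := by
  simp [pd, fderiv_fun_add hf hg]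

theorem pd_sub (hf : DifferentiableAt ℝ f x) (hg : DifferentiableAt ℝ g x) :
    pd i (fun y => f y - g y) x = pd i f x - pd i g x := by
  simp [pd, fderiv_fun_sub hf hg]

theorem pd_mul (hf : DifferentiableAt ℝ f x) (hg : DifferentiableAt ℝ g x) :
    pd i (fun y => f y * g y) x = pd i f x * g x + f x * pd i g x := by
  simp [pd, fderiv_fun_mul hf hg]
  ring

theorem pd_const (c : ℝ) : pd i (fun _ => c) x = 0 := by
  simp [pd]

theorem ContDiff.continuous_pd (hf : ContDiff ℝ 1 f) (i : Fin 2) : Continuous (pd i f) :=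
  (hf.continuous_fderiv one_ne_zero).clm_apply continuous_const

theorem ContDiff.contDiff_pd {n : WithTop ℕ∞} (hf : ContDiff ℝ (n + 1) f) (i : Fin 2) :
    ContDiff ℝ n (pd i f) :=
  (hf.fderiv_right le_rfl).clm_apply contDiff_const

theorem pd_eq_zero_of_notMem_tsupport (hx : x ∉ tsupport f) : pd i f x = 0 := by
  simp [pd, fderiv_of_notMem_tsupport ℝ hx]

theorem pd_pd_eq_zero_of_notMem_tsupport (hx : x ∉ tsupport f) : pd i (pd k f) x = 0 :=
  pd_eq_zero_of_notMem_tsupport fun h => hx (tsupport_fderiv_apply_subset ℝ _ h)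

theorem pd_pd_comm (hf : ContDiff ℝ 2 f) (x : Fin 2 → ℝ) (i k : Fin 2) :
    pd i (pd k f) x = pd k (pd i f) x := by
  have hf' : Differentiable ℝ (fderiv ℝ f) := (hf.fderiv_right le_rfl).differentiable one_ne_zero
  have hpd : ∀ i k, pd i (pd k f) x = fderiv ℝ (fderiv ℝ f) x (Pi.single i 1) (Pi.single k 1) :=
    fun i k => by
      rw [pd, show pd k f = fun y => fderiv ℝ f y (Pi.single k 1) from rfl,
        fderiv_clm_apply (hf' x) (differentiableAt_const _)]
      simp
  rw [hpd, hpd, (hf.contDiffAt.isSymmSndFDerivAt (by simp)).eq]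

end PartialDerivative

noncomputable def gradEnergyFlux (F : (Fin 2 → ℝ) → ℝ) (w : (Fin 2 → ℝ) → Fin 2 → ℝ) (k : Fin 2)
    (y : Fin 2 → ℝ) : ℝ :=
  pd k F y * ∑ l, pd l F y * w y l - 2⁻¹ * ((∑ l, pd l F y * pd l F y) * w y k)

section GradEnergyFlux

variable {F : (Fin 2 → ℝ) → ℝ} {w : (Fin 2 → ℝ) → Fin 2 → ℝ}

theorem sum_pd_gradEnergyFlux (hF : ContDiff ℝ 2 F) (hw : Differentiable ℝ w) (x : Fin 2 → ℝ) :
    ∑ k, pd k (gradEnergyFlux F w k) x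
      = lap F x * ∑ l, pd l F x * w x l
        + ∑ k, ∑ l, pd k F x * pd l F x * pd k (fun y => w y l) x
        - 2⁻¹ * ((∑ l, pd l F x * pd l F x) * ∑ k, pd k (fun y => w y k) x) := by
  have hdF : ∀ l, Differentiable ℝ (pd l F) := fun l =>
    (hF.contDiff_pd l).differentiable one_ne_zero
  unfold gradEnergyFlux
  simp (disch := fun_prop) only [Fin.sum_univ_two, pd_sub, pd_add, pd_mul, pd_const, lap]
  rw [pd_pd_comm hF x 0 1]
  ring

theorem contDiff_gradEnergyFlux (hF : ContDiff ℝ 2 F) (hw : ContDiff ℝ 1 w) (k : Fin 2) :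
    ContDiff ℝ 1 (gradEnergyFlux F w k) := by
  have hdF : ∀ l, ContDiff ℝ 1 (pd l F) := hF.contDiff_pd
  unfold gradEnergyFlux
  fun_prop

theorem hasCompactSupport_gradEnergyFlux (hc : HasCompactSupport F) (k : Fin 2) :
    HasCompactSupport (gradEnergyFlux F w k) :=
  hc.of_eq_zero_off_tsupport fun x hx => by
    simp [gradEnergyFlux, pd_eq_zero_of_notMem_tsupport hx]

theorem integrable_lap_mul_sum_pd_mul (hF : ContDiff ℝ 2 F) (hc : HasCompactSupport F)
    (hw : Continuous w) : Integrable (fun x => lap F x * ∑ i, pd i F x * w x i) := by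
  have hdF : ∀ l, ContDiff ℝ 1 (pd l F) := hF.contDiff_pd
  have hddF : ∀ k l, Continuous (pd k (pd l F)) := fun k l => (hdF l).continuous_pd k
  refine Continuous.integrable_of_hasCompactSupport (by unfold lap; fun_prop) ?_
  exact hc.of_eq_zero_off_tsupport fun x hx => by
    simp [lap, pd_eq_zero_of_notMem_tsupport hx, pd_pd_eq_zero_of_notMem_tsupport hx]

theorem integrable_sum_pd_mul_pd_mul_pd (hF : ContDiff ℝ 1 F) (hc : HasCompactSupport F)
    (hw : ContDiff ℝ 1 w) :
    Integrable (fun x => ∑ k, ∑ l, pd k F x * pd l F x * pd k (fun y => w y l) x) := by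
  have hdF : ∀ l, Continuous (pd l F) := fun l => hF.continuous_pd l
  have hdw : ∀ k l, Continuous (pd k (fun y => w y l)) :=
    fun k l => (contDiff_pi.mp hw l).continuous_pd k
  refine Continuous.integrable_of_hasCompactSupport (by fun_prop) ?_
  exact hc.of_eq_zero_off_tsupport fun x hx => by simp [pd_eq_zero_of_notMem_tsupport hx]

theorem integral_lap_mul_sum_pd_mul (hF : ContDiff ℝ 2 F) (hc : HasCompactSupport F)
    (hw : ContDiff ℝ 1 w) (hdiv : ∀ x, ∑ k, pd k (fun y => w y k) x = 0) :
    ∫ x, lap F x * ∑ i, pd i F x * w x i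
      = - ∫ x, ∑ k, ∑ l, pd k F x * pd l F x * pd k (fun y => w y l) x := by
  have hV := contDiff_gradEnergyFlux hF hw
  have hVc := hasCompactSupport_gradEnergyFlux (w := w) hc
  have hflux : ∫ x, ∑ k, pd k (gradEnergyFlux F w k) x = 0 := by
    rw [integral_finsetSum _ fun k _ =>
      ((hV k).integrable_fderiv_apply (hVc k) _ : Integrable (pd k _))]
    exact Finset.sum_eq_zero fun k _ => integral_fderiv_apply_eq_zero (hV k) (hVc k) _
  apply eq_neg_of_add_eq_zero_left
  rw [← integral_add (integrable_lap_mul_sum_pd_mul hF hc hw.continuous)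
    (integrable_sum_pd_mul_pd_mul_pd (hF.of_le one_le_two) hc hw), ← hflux]
  congr with x
  rw [sum_pd_gradEnergyFlux hF (hw.differentiable one_ne_zero) x, hdiv x]
  ring

end GradEnergyFlux

/-- `∫ Σ_j Δu_j (∇u_j · w) = -∫ Σ_{j,k,ℓ} ∂_ku_j ∂_ℓu_j ∂_kw_ℓ` for compactly
supported `C²` `u` and divergence-free `C¹` `w`. -/
theorem laplacian_gradform_against_divfree
    (u w : (Fin 2 → ℝ) → (Fin 2 → ℝ))
    (hu : ContDiff ℝ 2 u) (hc : HasCompactSupport u)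
    (hw : ContDiff ℝ 1 w)
    (hdiv : ∀ x, pd 0 (fun y => w y 0) x + pd 1 (fun y => w y 1) x = 0) :
    (∫ x : Fin 2 → ℝ,
        ∑ j, lap (fun z => u z j) x * (∑ i, pd i (fun y => u y j) x * w x i))
    = - ∫ x : Fin 2 → ℝ,
        ∑ j, ∑ k, ∑ l,
          pd k (fun y => u y j) x * pd l (fun y => u y j) x
            * pd k (fun y => w y l) x := by
  have hdiv_sum : ∀ x, ∑ k, pd k (fun y => w y k) x = 0 := by simpa [Fin.sum_univ_two] using hdiv
  have huj : ∀ j, ContDiff ℝ 2 (fun z => u z j) := contDiff_pi.mp hu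
  have hcj : ∀ j, HasCompactSupport (fun z => u z j) := fun j =>
    hc.comp_left (g := fun v : Fin 2 → ℝ => v j) rfl
  rw [integral_finsetSum _ fun j _ =>
      integrable_lap_mul_sum_pd_mul (huj j) (hcj j) hw.continuous,
    integral_finsetSum _ fun j _ =>
      integrable_sum_pd_mul_pd_mul_pd ((huj j).of_le one_le_two) (hcj j) hw,
    ← Finset.sum_neg_distrib]
  exact Finset.sum_congr rfl fun j _ => integral_lap_mul_sum_pd_mul (huj j) (hcj j) hw hdiv_sum
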